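/- (Strict monotonicity of the minimal norm function.) Assume -A generates a contraction semigroup T and the L¹ observability inequality K(τ)∫_0^τ ||B*T*_tη||_U dt ≥ ||T*_τη|| holds for all η ∈ X and τ > 0, with K continuous on (0,∞). Let τ̂ = inf{t : ||T_tψ|| ≤ r} (possibly +∞) with ψ ∉ B(0,r). Then the minimal norm map τ ↦ N*(τ) is strictly decreasing on (0, τ̂). -/

import Mathlib

/-!
Let `f` be an optimal control for time `τ₁`, with `M = N*(τ₁) > 0`, and `s = τ₂ - τ₁`.
On `(0, τ₁]` use `(1 - ε) f`; the state at `τ₂` is then `(1 - ε) T_s z + ε T_{τ₂} ψ + Φ_s g`,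
where `z` is the state reached by `f` and `g` is the control used on `(τ₁, τ₂]`.
By Hahn–Banach, the `L¹` observability inequality says that `T_s x` lies in the closure of the
states reachable from `0` in time `s` with controls bounded by `K(s) ‖x‖`: in every direction `η`
the bang-bang control `c φ / ‖φ‖`, `φ(σ) = B* T*_{s-σ} η`, attains `c ∫ ‖B* T*_t η‖`, which
dominates `⟪η, T_s x⟫`. So `Φ_s g` can be taken `ε r`-close to `-ε T_{τ₂} ψ` with
`‖g‖ ≤ ε K(s) ‖T_{τ₁} ψ‖ =: ε a`, and since `T_s` is a contraction the new state lies in the closed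
ball of radius `r`. For `ε = M / (a + M)` both pieces of the new control are bounded by
`(1 - ε) M = ε a = a M / (a + M) < M`.
-/

open MeasureTheory Filter

/-- The state trajectory `z(t;ψ,u) = T_t ψ + ∫_0^t T_{t-σ} B u(σ) dσ`. -/
noncomputable def traj {X U : Type*} [NormedAddCommGroup X] [NormedSpace ℝ X] [CompleteSpace X]
    [NormedAddCommGroup U] [NormedSpace ℝ U]
    (T : ℝ → X →L[ℝ] X) (B : U →L[ℝ] X) (ψ : X) (u : ℝ → U) (t : ℝ) : X :=
  T t ψ + ∫ σ in Set.Ioc 0 t, T (t - σ) (B (u σ))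

open Set Topology

theorem continuousAt_of_inner_of_norm {α E : Type*} [TopologicalSpace α]
    [NormedAddCommGroup E] [InnerProductSpace ℝ E] {f : α → E} {a : α}
    (hinner : ∀ v, ContinuousAt (fun t => inner ℝ (f t) v) a)
    (hnorm : ContinuousAt (fun t => ‖f t‖) a) : ContinuousAt f a := by
  have hsq : Tendsto (fun t => ‖f t - f a‖ ^ 2) (𝓝 a) (𝓝 0) := by
    simp_rw [norm_sub_sq_real]
    have := ((hnorm.tendsto.pow 2).sub ((hinner (f a)).tendsto.const_mul 2)).add_const
      (‖f a‖ ^ 2)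
    convert this using 2
    rw [real_inner_self_eq_norm_sq]
    ring
  rw [ContinuousAt, tendsto_iff_norm_sub_tendsto_zero]
  simpa [Function.comp_def, Real.sqrt_sq (norm_nonneg _)] using
    (Real.continuous_sqrt.tendsto 0).comp hsq

-- `T` is only constrained on `[0, ∞)`; `T (max t 0)` extends it constantly to negative times.
theorem continuous_apply_max_zero {E F : Type*} [NormedAddCommGroup E] [NormedSpace ℝ E]
    [NormedAddCommGroup F] [NormedSpace ℝ F] (T : ℝ → E →L[ℝ] F)
    (hTcont : ∀ x, Continuous fun t => T t x)
    (hTcontr : ∀ t, 0 ≤ t → ‖T t‖ ≤ 1) :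
    Continuous fun p : ℝ × E => T (max p.1 0) p.2 := by
  rw [continuous_iff_continuousAt]
  rintro ⟨t₀, x₀⟩
  have hsmall : Tendsto (fun p : ℝ × E => T (max p.1 0) (p.2 - x₀)) (𝓝 (t₀, x₀)) (𝓝 0) := by
    refine squeeze_zero_norm (a := fun p => ‖p.2 - x₀‖) (fun p => ?_) ?_
    · simpa using (T _).le_of_opNorm_le (hTcontr _ (le_max_right _ _)) (p.2 - x₀)
    · simpa using ((continuous_snd.sub (continuous_const (y := x₀))).norm.tendsto (t₀, x₀))
  have horbit : Tendsto (fun p : ℝ × E => T (max p.1 0) x₀) (𝓝 (t₀, x₀)) (𝓝 (T (max t₀ 0) x₀)) :=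
    ((hTcont x₀).comp (continuous_fst.max continuous_const)).tendsto _
  simpa [ContinuousAt, ← map_add] using hsmall.add horbit

noncomputable def concat {U : Type*} (f g : ℝ → U) (τ : ℝ) : ℝ → U :=
  (Iic τ).piecewise f fun σ => g (σ - τ)

theorem aestronglyMeasurable_concat {U : Type*} [TopologicalSpace U] {τ s : ℝ} (hs : 0 ≤ s)
    {f g : ℝ → U}
    (hf : AEStronglyMeasurable f (volume.restrict (Ioc 0 τ))) (hg : StronglyMeasurable g) :
    AEStronglyMeasurable (concat f g τ) (volume.restrict (Ioc 0 (τ + s))) := by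
  refine AEStronglyMeasurable.piecewise measurableSet_Iic ?_
    (hg.comp_measurable (measurable_id.sub measurable_const)).aestronglyMeasurable
  rwa [Measure.restrict_restrict measurableSet_Iic, inter_comm, Ioc_inter_Iic,
    inf_eq_right.2 (le_add_of_nonneg_right hs)]

theorem ae_norm_concat_le {U : Type*} [Norm U] {τ s C : ℝ} (hτ : 0 ≤ τ) (hs : 0 ≤ s)
    {f g : ℝ → U}
    (hf : ∀ᵐ σ ∂volume.restrict (Ioc 0 τ), ‖f σ‖ ≤ C) (hg : ∀ σ, ‖g σ‖ ≤ C) :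
    ∀ᵐ σ ∂volume.restrict (Ioc 0 (τ + s)), ‖concat f g τ σ‖ ≤ C := by
  rw [← Ioc_union_Ioc_eq_Ioc hτ (le_add_of_nonneg_right hs), ae_restrict_union_iff]
  constructor
  · filter_upwards [hf, ae_restrict_mem measurableSet_Ioc] with σ hσC hσ
    rwa [concat, piecewise_eq_of_mem _ _ _ (mem_Iic.2 hσ.2)]
  · filter_upwards [ae_restrict_mem measurableSet_Ioc] with σ hσ
    rw [concat, piecewise_eq_of_notMem _ _ _ (notMem_Iic.2 hσ.1)]
    exact hg _

section InputMap

variable {X U : Type*} [NormedAddCommGroup X] [NormedSpace ℝ X]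
    [NormedAddCommGroup U] [NormedSpace ℝ U] (T : ℝ → X →L[ℝ] X) (B : U →L[ℝ] X)

/-- `Φ_τ u`, the state reached from `0` at time `τ` under the control `u`. -/
noncomputable def inputMap (τ : ℝ) (u : ℝ → U) : X :=
  ∫ σ in Ioc 0 τ, T (τ - σ) (B (u σ))

theorem traj_eq_add_inputMap [CompleteSpace X] (ψ : X) (u : ℝ → U) (τ : ℝ) :
    traj T B ψ u τ = T τ ψ + inputMap T B τ u :=
  rfl

theorem inputMap_smul (τ a : ℝ) (u : ℝ → U) :
    inputMap T B τ (a • u) = a • inputMap T B τ u := by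
  simp only [inputMap, Pi.smul_apply, map_smul, integral_smul]

theorem integrableOn_inputMap_integrand (hTcont : ∀ x, Continuous fun t => T t x)
    (hTcontr : ∀ t, 0 ≤ t → ‖T t‖ ≤ 1) {τ C : ℝ} {u : ℝ → U}
    (hu : AEStronglyMeasurable u (volume.restrict (Ioc 0 τ)))
    (huC : ∀ᵐ σ ∂volume.restrict (Ioc 0 τ), ‖u σ‖ ≤ C) :
    IntegrableOn (fun σ => T (τ - σ) (B (u σ))) (Ioc 0 τ) := by
  have hmem := ae_restrict_mem (μ := volume) (measurableSet_Ioc (a := (0 : ℝ)) (b := τ))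
  have hmeas : AEStronglyMeasurable (fun σ => T (max (τ - σ) 0) (B (u σ)))
      (volume.restrict (Ioc 0 τ)) :=
    (continuous_apply_max_zero T hTcont hTcontr).comp_aestronglyMeasurable
      ((continuous_const.sub continuous_id).aestronglyMeasurable.prodMk
        (B.continuous.comp_aestronglyMeasurable hu))
  refine Integrable.mono' (integrable_const (‖B‖ * C)) (hmeas.congr ?_) ?_
  · filter_upwards [hmem] with σ hσ
    rw [max_eq_left (sub_nonneg.2 hσ.2)]
  · filter_upwards [hmem, huC] with σ hσ hσC
    calc ‖T (τ - σ) (B (u σ))‖ ≤ ‖B (u σ)‖ := by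
          simpa using (T _).le_of_opNorm_le (hTcontr _ (sub_nonneg.2 hσ.2)) (B (u σ))
      _ ≤ ‖B‖ * C := B.le_of_opNorm_le_of_le le_rfl hσC

theorem inputMap_concat [CompleteSpace X]
    (hTadd : ∀ s t, 0 ≤ s → 0 ≤ t → T (s + t) = (T s).comp (T t))
    {τ s : ℝ} (hτ : 0 ≤ τ) (hs : 0 ≤ s) {f g : ℝ → U}
    (hf : IntegrableOn (fun σ => T (τ - σ) (B (f σ))) (Ioc 0 τ))
    (hg : IntegrableOn (fun σ => T (s - σ) (B (g σ))) (Ioc 0 s)) :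
    inputMap T B (τ + s) (concat f g τ) =
      T s (inputMap T B τ f) + inputMap T B s g := by
  have hshift : MeasurePreserving (· + τ) volume volume := measurePreserving_add_right volume τ
  have hemb : MeasurableEmbedding (· + τ) := (MeasurableEquiv.addRight τ).measurableEmbedding
  have himage : (· + τ) '' Ioc 0 s = Ioc τ (τ + s) := by
    rw [image_add_const_Ioc, zero_add, add_comm]
  have hfirst : EqOn (fun σ => T (τ + s - σ) (B (concat f g τ σ)))
      (fun σ => T s (T (τ - σ) (B (f σ)))) (Ioc 0 τ) := fun σ hσ => by
    dsimp only
    rw [concat, piecewise_eq_of_mem _ _ _ (mem_Iic.2 hσ.2), show τ + s - σ = s + (τ - σ) by ring,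
      hTadd s _ hs (sub_nonneg.2 hσ.2), ContinuousLinearMap.comp_apply]
  have hsecond : EqOn (fun σ => T (τ + s - σ) (B (concat f g τ σ)))
      (fun σ => T (s - (σ - τ)) (B (g (σ - τ)))) (Ioc τ (τ + s)) := fun σ hσ => by
    dsimp only
    rw [concat, piecewise_eq_of_notMem _ _ _ (notMem_Iic.2 hσ.1),
      show τ + s - σ = s - (σ - τ) by ring]
  have hg' : IntegrableOn (fun σ => T (s - (σ - τ)) (B (g (σ - τ)))) (Ioc τ (τ + s)) := by
    rw [← himage, hshift.integrableOn_image hemb]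
    simpa [Function.comp_def] using hg
  have hf' : IntegrableOn (fun σ => T s (T (τ - σ) (B (f σ)))) (Ioc 0 τ) :=
    (T s).integrable_comp hf
  unfold inputMap
  rw [← Ioc_union_Ioc_eq_Ioc hτ (le_add_of_nonneg_right hs),
    setIntegral_union (Ioc_disjoint_Ioc_of_le le_rfl) measurableSet_Ioc
      (hf'.congr_fun hfirst.symm measurableSet_Ioc)
      (hg'.congr_fun hsecond.symm measurableSet_Ioc),
    setIntegral_congr_fun measurableSet_Ioc hfirst, setIntegral_congr_fun measurableSet_Ioc hsecond,
    (T s).integral_comp_comm hf, ← himage, hshift.setIntegral_image_emb hemb]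
  simp

theorem traj_concat [CompleteSpace X]
    (hTadd : ∀ s t, 0 ≤ s → 0 ≤ t → T (s + t) = (T s).comp (T t))
    {τ s : ℝ} (hτ : 0 ≤ τ) (hs : 0 ≤ s) (ψ : X) {f g : ℝ → U}
    (hf : IntegrableOn (fun σ => T (τ - σ) (B (f σ))) (Ioc 0 τ))
    (hg : IntegrableOn (fun σ => T (s - σ) (B (g σ))) (Ioc 0 s)) :
    traj T B ψ (concat f g τ) (τ + s) = T s (traj T B ψ f τ) + inputMap T B s g := by
  rw [traj_eq_add_inputMap, inputMap_concat T B hTadd hτ hs hf hg, traj_eq_add_inputMap,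
    add_comm τ s, hTadd s τ hs hτ, ContinuousLinearMap.comp_apply, map_add, add_assoc]

theorem pos_of_norm_traj_le [CompleteSpace X] {τ M r : ℝ} {ψ : X} {f : ℝ → U}
    (hfM : ∀ᵐ σ ∂volume.restrict (Ioc 0 τ), ‖f σ‖ ≤ M) (hfr : ‖traj T B ψ f τ‖ ≤ r)
    (hψ : r < ‖T τ ψ‖) : 0 < M := by
  by_contra! hM
  have hzero : inputMap T B τ f = 0 := integral_eq_zero_of_ae <| by
    filter_upwards [hfM] with σ hσ
    simp [norm_le_zero_iff.1 (hσ.trans hM)]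
  rw [traj_eq_add_inputMap, hzero, add_zero] at hfr
  linarith

noncomputable def reachableSet (s c : ℝ) : Set X :=
  inputMap T B s '' {g | StronglyMeasurable g ∧ ∀ σ, ‖g σ‖ ≤ c}

theorem convex_reachableSet (hTcont : ∀ x, Continuous fun t => T t x)
    (hTcontr : ∀ t, 0 ≤ t → ‖T t‖ ≤ 1) (s c : ℝ) : Convex ℝ (reachableSet T B s c) := by
  rintro _ ⟨g₁, ⟨hg₁, hg₁c⟩, rfl⟩ _ ⟨g₂, ⟨hg₂, hg₂c⟩, rfl⟩ a b ha hb hab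
  have hint : ∀ (g : ℝ → U) (a : ℝ), StronglyMeasurable g → (∀ σ, ‖g σ‖ ≤ c) →
      IntegrableOn (fun σ => a • T (s - σ) (B (g σ))) (Ioc 0 s) := fun g a hg hgc =>
    (integrableOn_inputMap_integrand T B hTcont hTcontr hg.aestronglyMeasurable
      (Eventually.of_forall hgc)).smul a
  refine ⟨a • g₁ + b • g₂, ⟨(hg₁.const_smul a).add (hg₂.const_smul b), fun σ => ?_⟩, ?_⟩
  · simpa using convex_closedBall (0 : U) c (mem_closedBall_zero_iff.2 (hg₁c σ))
      (mem_closedBall_zero_iff.2 (hg₂c σ)) ha hb hab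
  · simp only [inputMap, Pi.add_apply, Pi.smul_apply, map_add, map_smul]
    rw [integral_add (hint g₁ a hg₁ hg₁c) (hint g₂ b hg₂ hg₂c), integral_smul, integral_smul]

end InputMap

section Hilbert

variable {X U : Type*} [NormedAddCommGroup X] [InnerProductSpace ℝ X] [CompleteSpace X]
    [NormedAddCommGroup U] [InnerProductSpace ℝ U] [CompleteSpace U]
    (T : ℝ → X →L[ℝ] X) (B : U →L[ℝ] X)

theorem antitone_norm_adjoint_apply_max_zero
    (hTadd : ∀ s t, 0 ≤ s → 0 ≤ t → T (s + t) = (T s).comp (T t))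
    (hTcontr : ∀ t, 0 ≤ t → ‖T t‖ ≤ 1) (η : X) :
    Antitone fun t => ‖(T (max t 0)).adjoint η‖ := by
  intro t t' htt'
  have hab : max t 0 ≤ max t' 0 := max_le_max_right 0 htt'
  have hsplit : T (max t' 0) = (T (max t 0)).comp (T (max t' 0 - max t 0)) := by
    rw [← hTadd _ _ (le_max_right _ _) (sub_nonneg.2 hab), add_sub_cancel]
  dsimp only
  rw [hsplit, ContinuousLinearMap.adjoint_comp, ContinuousLinearMap.comp_apply]
  refine ((T _).adjoint.le_of_opNorm_le ?_ _).trans_eq (one_mul _)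
  rw [LinearIsometryEquiv.norm_map]
  exact hTcontr _ (sub_nonneg.2 hab)

/-- The orbit is weakly continuous and its norm is antitone, hence continuous off a countable
set, where weak continuity upgrades to norm continuity. -/
theorem stronglyMeasurable_adjoint_apply_max_zero
    (hTadd : ∀ s t, 0 ≤ s → 0 ≤ t → T (s + t) = (T s).comp (T t))
    (hTcont : ∀ x, Continuous fun t => T t x) (hTcontr : ∀ t, 0 ≤ t → ‖T t‖ ≤ 1) (η : X) :
    StronglyMeasurable fun t => (T (max t 0)).adjoint η := by
  refine StronglyMeasurable.of_countable_not_continuousAt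
    ((antitone_norm_adjoint_apply_max_zero T hTadd hTcontr η).countable_not_continuousAt.mono
      fun t hdisc hnorm => hdisc (continuousAt_of_inner_of_norm (fun v => ?_) hnorm))
  simp_rw [ContinuousLinearMap.adjoint_inner_left]
  exact (continuous_const.inner ((hTcont v).comp (continuous_id.max continuous_const))).continuousAt

theorem exists_inner_inputMap_eq
    (hTadd : ∀ s t, 0 ≤ s → 0 ≤ t → T (s + t) = (T s).comp (T t))
    (hTcont : ∀ x, Continuous fun t => T t x) (hTcontr : ∀ t, 0 ≤ t → ‖T t‖ ≤ 1)
    {s c : ℝ} (hs : 0 ≤ s) (hc : 0 ≤ c) (η : X) :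
    ∃ g : ℝ → U, StronglyMeasurable g ∧ (∀ σ, ‖g σ‖ ≤ c) ∧
      inner ℝ η (inputMap T B s g) = c * ∫ t in Ioc 0 s, ‖B.adjoint ((T t).adjoint η)‖ := by
  set φ : ℝ → U := fun t => B.adjoint ((T (max t 0)).adjoint η)
  have hφ : StronglyMeasurable fun σ => φ (s - σ) :=
    (B.adjoint.continuous.comp_stronglyMeasurable
      (stronglyMeasurable_adjoint_apply_max_zero T hTadd hTcont hTcontr η)).comp_measurable
      (measurable_const.sub measurable_id)
  set g : ℝ → U := fun σ => (c * ‖φ (s - σ)‖⁻¹) • φ (s - σ)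
  have hgc : ∀ σ, ‖g σ‖ ≤ c := fun σ => by
    rcases eq_or_ne (φ (s - σ)) 0 with h | h
    · simp [g, h, hc]
    · simp [g, norm_smul, abs_of_nonneg hc, h]
  have hinner : ∀ σ ∈ Ioc 0 s, inner ℝ η (T (s - σ) (B (g σ))) = c * ‖φ (s - σ)‖ := by
    intro σ hσ
    have hφσ : φ (s - σ) = B.adjoint ((T (s - σ)).adjoint η) := by
      simp only [φ, max_eq_left (sub_nonneg.2 hσ.2)]
    rw [← ContinuousLinearMap.adjoint_inner_left, ← ContinuousLinearMap.adjoint_inner_left, ← hφσ,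
      real_inner_smul_right, real_inner_self_eq_norm_sq]
    rcases eq_or_ne ‖φ (s - σ)‖ 0 with h | h
    · simp [h]
    · field_simp
  have hg : StronglyMeasurable g := (hφ.norm.measurable.inv.const_mul c).stronglyMeasurable.smul hφ
  refine ⟨g, hg, hgc, ?_⟩
  rw [inputMap, ← integral_inner (integrableOn_inputMap_integrand T B hTcont hTcontr
      hg.aestronglyMeasurable (Eventually.of_forall hgc)),
    setIntegral_congr_fun measurableSet_Ioc hinner, integral_const_mul,
    ← intervalIntegral.integral_of_le hs, ← intervalIntegral.integral_of_le hs,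
    intervalIntegral.integral_comp_sub_left (fun t => ‖φ t‖) s, sub_self, sub_zero]
  congr 1
  refine intervalIntegral.integral_congr fun t ht => ?_
  rw [uIcc_of_le hs] at ht
  simp only [φ, max_eq_left ht.1]

theorem apply_mem_closure_reachableSet
    (hTadd : ∀ s t, 0 ≤ s → 0 ≤ t → T (s + t) = (T s).comp (T t))
    (hTcont : ∀ x, Continuous fun t => T t x) (hTcontr : ∀ t, 0 ≤ t → ‖T t‖ ≤ 1)
    {s K : ℝ} (hs : 0 ≤ s) (hK : 0 ≤ K)
    (hobs : ∀ η, ‖(T s).adjoint η‖ ≤ K * ∫ t in Ioc 0 s, ‖B.adjoint ((T t).adjoint η)‖) (x : X) :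
    T s x ∈ closure (reachableSet T B s (K * ‖x‖)) := by
  by_contra hx
  obtain ⟨F, u, hF, hFx⟩ := geometric_hahn_banach_closed_point
    (convex_reachableSet T B hTcont hTcontr s _).closure isClosed_closure hx
  set η := (InnerProductSpace.toDual ℝ X).symm F
  have hFη : ∀ y, F y = inner ℝ η y := fun y => InnerProductSpace.toDual_symm_apply.symm
  obtain ⟨g, hg, hgc, hgη⟩ :=
    exists_inner_inputMap_eq T B hTadd hTcont hTcontr hs (mul_nonneg hK (norm_nonneg x)) η
  have hreach := hF _ (subset_closure ⟨g, ⟨hg, hgc⟩, rfl⟩)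
  have hobs_x : inner ℝ η (T s x) ≤ K * ‖x‖ * ∫ t in Ioc 0 s, ‖B.adjoint ((T t).adjoint η)‖ :=
    calc inner ℝ η (T s x) = inner ℝ ((T s).adjoint η) x :=
          ((T s).adjoint_inner_left x η).symm
      _ ≤ ‖(T s).adjoint η‖ * ‖x‖ := real_inner_le_norm _ _
      _ ≤ (K * ∫ t in Ioc 0 s, ‖B.adjoint ((T t).adjoint η)‖) * ‖x‖ :=
          mul_le_mul_of_nonneg_right (hobs η) (norm_nonneg x)
      _ = _ := by ring
  rw [hFη] at hreach hFx
  linarith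

theorem exists_control_norm_traj_le
    (hTadd : ∀ s t, 0 ≤ s → 0 ≤ t → T (s + t) = (T s).comp (T t))
    (hTcont : ∀ x, Continuous fun t => T t x) (hTcontr : ∀ t, 0 ≤ t → ‖T t‖ ≤ 1)
    {τ s K r M : ℝ} (hτ : 0 ≤ τ) (hs : 0 ≤ s) (hK : 0 ≤ K)
    (hobs : ∀ η, ‖(T s).adjoint η‖ ≤ K * ∫ t in Ioc 0 s, ‖B.adjoint ((T t).adjoint η)‖)
    (hr : 0 < r) (hM : 0 < M) {ψ : X} {f : ℝ → U}
    (hf : AEStronglyMeasurable f (volume.restrict (Ioc 0 τ)))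
    (hfM : ∀ᵐ σ ∂volume.restrict (Ioc 0 τ), ‖f σ‖ ≤ M) (hfr : ‖traj T B ψ f τ‖ ≤ r) :
    ∃ u : ℝ → U, AEStronglyMeasurable u (volume.restrict (Ioc 0 (τ + s))) ∧
      (∀ᵐ σ ∂volume.restrict (Ioc 0 (τ + s)),
        ‖u σ‖ ≤ K * ‖T τ ψ‖ * M / (K * ‖T τ ψ‖ + M)) ∧
      ‖traj T B ψ u (τ + s)‖ ≤ r := by
  set a := K * ‖T τ ψ‖ with ha_def
  have ha : 0 ≤ a := mul_nonneg hK (norm_nonneg _)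
  set ε := M / (a + M) with hε_def
  have hε : 0 < ε := by positivity
  have hε₁ : ε ≤ 1 := div_le_one_of_le₀ (le_add_of_nonneg_left ha) (by positivity)
  have hbound₁ : (1 - ε) * M = a * M / (a + M) := by rw [hε_def]; field_simp; ring
  have hbound₂ : K * ‖-ε • T τ ψ‖ = a * M / (a + M) := by
    rw [norm_smul, norm_neg, Real.norm_of_nonneg hε.le, hε_def]
    field_simp
    rw [ha_def]
  obtain ⟨_, ⟨g, ⟨hg, hgc⟩, rfl⟩, hgx⟩ := Metric.mem_closure_iff.1
    (apply_mem_closure_reachableSet T B hTadd hTcont hTcontr hs hK hobs (-ε • T τ ψ)) (ε * r)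
    (by positivity)
  rw [hbound₂] at hgc
  have hfε : ∀ᵐ σ ∂volume.restrict (Ioc 0 τ), ‖((1 - ε) • f) σ‖ ≤ a * M / (a + M) := by
    filter_upwards [hfM] with σ hσ
    rw [Pi.smul_apply, norm_smul, Real.norm_of_nonneg (sub_nonneg.2 hε₁), ← hbound₁]
    exact mul_le_mul_of_nonneg_left hσ (sub_nonneg.2 hε₁)
  refine ⟨concat ((1 - ε) • f) g τ, aestronglyMeasurable_concat hs (hf.const_smul _) hg,
    ae_norm_concat_le hτ hs hfε hgc, ?_⟩
  have htraj : traj T B ψ (concat ((1 - ε) • f) g τ) (τ + s) =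
      (1 - ε) • T s (traj T B ψ f τ) + (inputMap T B s g - T s (-ε • T τ ψ)) := by
    rw [traj_concat T B hTadd hτ hs ψ
      (integrableOn_inputMap_integrand T B hTcont hTcontr (hf.const_smul _) hfε)
      (integrableOn_inputMap_integrand T B hTcont hTcontr hg.aestronglyMeasurable
        (Eventually.of_forall hgc)), traj_eq_add_inputMap, traj_eq_add_inputMap, inputMap_smul]
    simp only [map_add, map_smul]
    module
  calc ‖traj T B ψ (concat ((1 - ε) • f) g τ) (τ + s)‖
      ≤ (1 - ε) * ‖T s (traj T B ψ f τ)‖ + ε * r := by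
        rw [htraj]
        refine (norm_add_le _ _).trans (add_le_add ?_ ?_)
        · rw [norm_smul, Real.norm_of_nonneg (sub_nonneg.2 hε₁)]
        · rw [← dist_eq_norm, dist_comm]
          exact hgx.le
    _ ≤ (1 - ε) * r + ε * r := by
        refine add_le_add_left (mul_le_mul_of_nonneg_left ?_ (sub_nonneg.2 hε₁)) _
        simpa using ((T s).le_of_opNorm_le (hTcontr s hs) _).trans (by simpa using hfr)
    _ = r := by ring

end Hilbert

theorem stmt13_general {X U : Type*} [NormedAddCommGroup X] [InnerProductSpace ℝ X] [CompleteSpace X]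
    [NormedAddCommGroup U] [InnerProductSpace ℝ U] [CompleteSpace U]
    (T : ℝ → X →L[ℝ] X) (B : U →L[ℝ] X)
    -- `T` is a `C₀`-semigroup of contractions (generated by `-A`)
    (hTadd : ∀ s t : ℝ, 0 ≤ s → 0 ≤ t → T (s + t) = (T s).comp (T t))
    (hTcont : ∀ x : X, Continuous fun t => T t x)
    (hTcontr : ∀ t : ℝ, 0 ≤ t → ‖T t‖ ≤ 1)
    -- the `L¹` observability inequality `K(τ) ∫_0^τ ‖B*T*_t η‖ dt ≥ ‖T*_τ η‖`
    (K : ℝ → ℝ) (hK_pos : ∀ τ : ℝ, 0 < τ → 0 < K τ)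
    (hobs : ∀ τ : ℝ, 0 < τ → ∀ η : X,
      ‖(T τ).adjoint η‖ ≤ K τ * ∫ t in Set.Ioc 0 τ, ‖B.adjoint ((T t).adjoint η)‖)
    (r : ℝ) (hr : 0 < r) (ψ : X)
    -- `N*(τ)` is the minimal `L^∞`-norm of controls steering `ψ` into `B(0,r)` at time `τ`
    (Nstar : ℝ → ℝ)
    (hNstar : ∀ τ : ℝ, 0 < τ → IsLeast {C : ℝ | 0 ≤ C ∧ ∃ f : ℝ → U,
      AEStronglyMeasurable f (volume.restrict (Set.Ioo 0 τ)) ∧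
      (∀ᵐ t ∂volume.restrict (Set.Ioo 0 τ), ‖f t‖ ≤ C) ∧
      traj T B ψ f τ ∈ Metric.closedBall (0 : X) r} (Nstar τ))
    :
    ∀ τ₁ τ₂ : ℝ, 0 < τ₁ → τ₁ < τ₂ → (∀ s ∈ Set.Ioc (0 : ℝ) τ₂, r < ‖T s ψ‖) →
      Nstar τ₂ < Nstar τ₁ := by
  intro τ₁ τ₂ hτ₁ h12 hball
  have hIoo : ∀ τ : ℝ, volume.restrict (Ioo 0 τ) = volume.restrict (Ioc 0 τ) := fun _ =>
    Measure.restrict_congr_set Ioo_ae_eq_Ioc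
  obtain ⟨⟨-, f, hf, hfM, hfr⟩, -⟩ := hNstar τ₁ hτ₁
  rw [hIoo] at hf hfM
  rw [mem_closedBall_zero_iff] at hfr
  have hM : 0 < Nstar τ₁ := pos_of_norm_traj_le T B hfM hfr (hball τ₁ ⟨hτ₁, h12.le⟩)
  have hs : 0 < τ₂ - τ₁ := sub_pos.2 h12
  set a := K (τ₂ - τ₁) * ‖T τ₁ ψ‖
  have ha : 0 ≤ a := mul_nonneg (hK_pos _ hs).le (norm_nonneg _)
  obtain ⟨u, hu, huM, hur⟩ := exists_control_norm_traj_le T B hTadd hTcont hTcontr hτ₁.le hs.le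
    (hK_pos _ hs).le (hobs _ hs) hr hM hf hfM hfr
  rw [add_sub_cancel] at hu huM hur
  calc Nstar τ₂ ≤ a * Nstar τ₁ / (a + Nstar τ₁) :=
        (hNstar τ₂ (hτ₁.trans h12)).2
          ⟨by positivity, u, by rwa [hIoo], by rwa [hIoo], mem_closedBall_zero_iff.2 hur⟩
    _ < Nstar τ₁ := by
        rw [div_lt_iff₀ (by positivity)]
        nlinarith

/-- (Strict monotonicity of the minimal norm function.) Under the `L¹`
observability inequality with `K` continuous and positive, the minimal norm map `τ ↦ N*(τ)`
is strictly decreasing on `(0, τ̂)`, where `τ̂ = inf {t : ‖T_t ψ‖ ≤ r}`; membership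
`τ ∈ (0, τ̂)` is expressed as `0 < τ ∧ ∀ s ∈ (0,τ], r < ‖T_s ψ‖`. -/
theorem stmt13 {X U : Type*} [NormedAddCommGroup X] [InnerProductSpace ℝ X] [CompleteSpace X]
    [NormedAddCommGroup U] [InnerProductSpace ℝ U] [CompleteSpace U]
    (T : ℝ → X →L[ℝ] X) (B : U →L[ℝ] X)
    -- `T` is a `C₀`-semigroup of contractions (generated by `-A`)
    (hT0 : T 0 = 1)
    (hTadd : ∀ s t : ℝ, 0 ≤ s → 0 ≤ t → T (s + t) = (T s).comp (T t))
    (hTcont : ∀ x : X, Continuous fun t => T t x)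
    (hTcontr : ∀ t : ℝ, 0 ≤ t → ‖T t‖ ≤ 1)
    -- the `L¹` observability inequality `K(τ) ∫_0^τ ‖B*T*_t η‖ dt ≥ ‖T*_τ η‖`
    (K : ℝ → ℝ) (hK_pos : ∀ τ : ℝ, 0 < τ → 0 < K τ) (hK_cont : ContinuousOn K (Set.Ioi 0))
    (hobs : ∀ τ : ℝ, 0 < τ → ∀ η : X,
      ‖(T τ).adjoint η‖ ≤ K τ * ∫ t in Set.Ioc 0 τ, ‖B.adjoint ((T t).adjoint η)‖)
    (r : ℝ) (hr : 0 < r) (ψ : X) (hψ : ψ ∉ Metric.closedBall (0 : X) r)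
    -- `N*(τ)` is the minimal `L^∞`-norm of controls steering `ψ` into `B(0,r)` at time `τ`
    (Nstar : ℝ → ℝ)
    (hNstar : ∀ τ : ℝ, 0 < τ → IsLeast {C : ℝ | 0 ≤ C ∧ ∃ f : ℝ → U,
      AEStronglyMeasurable f (volume.restrict (Set.Ioo 0 τ)) ∧
      (∀ᵐ t ∂volume.restrict (Set.Ioo 0 τ), ‖f t‖ ≤ C) ∧
      traj T B ψ f τ ∈ Metric.closedBall (0 : X) r} (Nstar τ))
    :
    ∀ τ₁ τ₂ : ℝ, 0 < τ₁ → τ₁ < τ₂ → (∀ s ∈ Set.Ioc (0 : ℝ) τ₂, r < ‖T s ψ‖) →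
      Nstar τ₂ < Nstar τ₁ :=
  stmt13_general T B hTadd hTcont hTcontr K hK_pos hobs r hr ψ Nstar hNstar
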